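/- arXiv:math/0307002 — 3 statements merged into one kernel-verified Lean document; each statement's English description precedes it below -/
import Mathlib

section
/- Let N ∈ sp(n,ℂ) with N² = 0 and Re Q_N ≥ 0 (i.e. Re σ(v, Nv) ≥ 0 for all v ∈ ℝ^{2n}). Write N = N₁ + iN₂ with N₁, N₂ real. Then N₁² = N₂² = N₁N₂ = N₂N₁ = 0; in particular N₁ and N₂ are each 2-step nilpotent real Hamiltonian maps. -/
open MeasureTheory Complex Matrix

noncomputable section

/-- Index type for `2n`-dimensional (symplectic) vectors: `X`-coordinates `inl j`,
`Y`-coordinates `inr j`. -/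
abbrev Idx (n : ℕ) := Fin n ⊕ Fin n

/-- The standard symplectic matrix `J = [[0, I],[-I, 0]]` over `ℂ`. -/
def Jmat (n : ℕ) : Matrix (Idx n) (Idx n) ℂ := Matrix.fromBlocks 0 1 (-1) 0

/-- The standard symplectic matrix `J = [[0, I],[-I, 0]]` over `ℝ`. -/
def JmatR (n : ℕ) : Matrix (Idx n) (Idx n) ℝ := Matrix.fromBlocks 0 1 (-1) 0

/-- The standard symplectic form `σ(z,w) = ᵗz J w` on `ℂ^{2n}`. -/
def sigmaC (n : ℕ) (z w : Idx n → ℂ) : ℂ := z ⬝ᵥ (Jmat n).mulVec w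

/-- The standard symplectic form on `ℝ^{2n}`. -/
def sigmaR (n : ℕ) (v w : Idx n → ℝ) : ℝ := v ⬝ᵥ (JmatR n).mulVec w

/-- Inclusion of real vectors into `ℂ^{2n}`. -/
def realVec (n : ℕ) (v : Idx n → ℝ) : Idx n → ℂ := fun i => (v i : ℂ)

/-- Complex conjugation on `ℂ^{2n}` relative to the real form `ℝ^{2n}`. -/
def conjVec (n : ℕ) (z : Idx n → ℂ) : Idx n → ℂ := fun i => (starRingEnd ℂ) (z i)

/-- `S ∈ sp(n, ℂ)`, i.e. `σ(Sz, w) + σ(z, Sw) = 0` for all `z, w`. -/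
def InSp (n : ℕ) (S : Matrix (Idx n) (Idx n) ℂ) : Prop := Sᵀ * Jmat n + Jmat n * S = 0

/-- `Re Q_S ≥ 0`: the real part of the quadratic form `Q_S(v) = σ(v, Sv)` is
positive semi-definite on `ℝ^{2n}`. -/
def RePosQ (n : ℕ) (S : Matrix (Idx n) (Idx n) ℂ) : Prop :=
  ∀ v : Idx n → ℝ, 0 ≤ (sigmaC n (realVec n v) (S.mulVec (realVec n v))).re

/-- The generalized eigenspace `V_μ` of the matrix `S` for the eigenvalue `μ`. -/
def genEig (n : ℕ) (S : Matrix (Idx n) (Idx n) ℂ) (μ : ℂ) : Submodule ℂ (Idx n → ℂ) :=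
  Module.End.maxGenEigenspace (Matrix.mulVecLin S) μ

/-- `V_r`: the sum of the generalized eigenspaces of `S` for real eigenvalues. -/
def Vreal (n : ℕ) (S : Matrix (Idx n) (Idx n) ℂ) : Submodule ℂ (Idx n → ℂ) :=
  ⨆ lam : ℝ, genEig n S (lam : ℂ)

/-- `V_i`: the sum of the generalized eigenspaces of `S` for non-real eigenvalues. -/
def Vimag (n : ℕ) (S : Matrix (Idx n) (Idx n) ℂ) : Submodule ℂ (Idx n → ℂ) :=
  ⨆ μ : {z : ℂ // z.im ≠ 0}, genEig n S (μ : ℂ)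

/-- `Sr` is the "real part" `S_r` of `S`: it agrees with `S` on `V_r` and vanishes on `V_i`. -/
def IsRealPart (n : ℕ) (S Sr : Matrix (Idx n) (Idx n) ℂ) : Prop :=
  (∀ v ∈ Vreal n S, Sr.mulVec v = S.mulVec v) ∧ ∀ v ∈ Vimag n S, Sr.mulVec v = 0

/-- `Si` is the "imaginary part" `S_i` of `S`: it vanishes on `V_r` and agrees with `S`
on `V_i`. -/
def IsImagPart (n : ℕ) (S Si : Matrix (Idx n) (Idx n) ℂ) : Prop :=
  (∀ v ∈ Vreal n S, Si.mulVec v = 0) ∧ ∀ v ∈ Vimag n S, Si.mulVec v = S.mulVec v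

/-- Condition (R): `V_λ ⊕ V_{−λ}` is invariant under complex conjugation for every
real `λ ≠ 0`. -/
def CondR (n : ℕ) (S : Matrix (Idx n) (Idx n) ℂ) : Prop :=
  ∀ lam : ℝ, lam ≠ 0 →
    ∀ z ∈ genEig n S (lam : ℂ) ⊔ genEig n S (-(lam : ℂ)),
      conjVec n z ∈ genEig n S (lam : ℂ) ⊔ genEig n S (-(lam : ℂ))

/-- `ν = Σ_j ν_j`: the sum of the imaginary parts of the eigenvalues of `S` lying in the
upper half plane, counted with multiplicity. -/
def nuTotal (n : ℕ) (S : Matrix (Idx n) (Idx n) ℂ) : ℝ :=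
  (S.charpoly.roots.map (fun z => max z.im 0)).sum

/-- `S_i ≠ 0`, i.e. `S` has at least one non-real eigenvalue. -/
def HasNonrealEig (n : ℕ) (S : Matrix (Idx n) (Idx n) ℂ) : Prop :=
  ∃ z ∈ S.charpoly.roots, z.im ≠ 0

/-- Semisimple (= diagonalizable over `ℂ`) matrix. -/
def IsSemisimpleMat (n : ℕ) (D : Matrix (Idx n) (Idx n) ℂ) : Prop :=
  ∃ (P : Matrix (Idx n) (Idx n) ℂ) (d : Idx n → ℂ), IsUnit P ∧ D = P * Matrix.diagonal d * P⁻¹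

/-- `S = D + N` is the Jordan decomposition of `S`: `D` semisimple, `N` nilpotent,
`DN = ND`. -/
def IsJordanDecomp (n : ℕ) (S D N : Matrix (Idx n) (Idx n) ℂ) : Prop :=
  S = D + N ∧ IsSemisimpleMat n D ∧ IsNilpotent N ∧ D * N = N * D

/-! Put `A = J N`, complex symmetric because `N` is Hamiltonian, and `A = R + i S` with `R, S` real
symmetric. Then `N² = 0` gives `A J A = 0`, and `Re Q_N ≥ 0` says that `R` is positive
semidefinite. For `M = J A` both `Mᴴ R M` and `Mᴴ S M` are Hermitian, so `Mᴴ A M = 0` forces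
`Mᴴ R M = 0`, hence `R M = 0` by positivity, and then `S M = 0` as well. Taking real and imaginary
parts gives `P J Q = 0` for `P, Q ∈ {R, S}`, while `N₁ = -J R` and `N₂ = -J S`. -/

open scoped ComplexOrder

namespace Matrix

variable {l m n : Type*}

lemma map_re_add_I_smul_map_im (M : Matrix m n ℂ) :
    (M.map re).map ((↑) : ℝ → ℂ) + I • (M.map im).map ((↑) : ℝ → ℂ) = M := by
  ext i j; simp [mul_comm I, re_add_im]

lemma IsHermitian.eq_zero_of_add_I_smul_eq_zero {X Y : Matrix n n ℂ} (hX : X.IsHermitian)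
    (hY : Y.IsHermitian) (h : X + I • Y = 0) : X = 0 := by
  have h' : X - I • Y = 0 := by
    simpa [hX.eq, hY.eq, sub_eq_add_neg] using congrArg (·ᴴ) h
  have h2 : (2 : ℂ) • X = 0 := by
    rw [two_smul, show X + X = X + I • Y + (X - I • Y) by abel, h, h', add_zero]
  exact (smul_eq_zero.mp h2).resolve_left two_ne_zero

variable [Fintype m]

lemma map_re_map_ofReal_mul (B : Matrix l m ℝ) (M : Matrix m n ℂ) :
    (B.map ((↑) : ℝ → ℂ) * M).map re = B * M.map re := by
  ext i j; simp [mul_apply, re_sum]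

lemma map_im_map_ofReal_mul (B : Matrix l m ℝ) (M : Matrix m n ℂ) :
    (B.map ((↑) : ℝ → ℂ) * M).map im = B * M.map im := by
  ext i j; simp [mul_apply, im_sum]

lemma re_ofReal_dotProduct_mulVec_ofReal (M : Matrix m m ℂ) (v : m → ℝ) :
    ((fun i => (v i : ℂ)) ⬝ᵥ M *ᵥ fun i => (v i : ℂ)).re = v ⬝ᵥ M.map re *ᵥ v := by
  simp [dotProduct, mulVec, re_sum, Finset.mul_sum]

lemma PosSemidef.mul_eq_zero_of_conjTranspose_mul_mul_eq_zero {𝕜 : Type*} [RCLike 𝕜]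
    {H : Matrix m m 𝕜} (hH : H.PosSemidef) {M : Matrix m n 𝕜} (h : Mᴴ * H * M = 0) :
    H * M = 0 := by
  ext i j
  have hcol : star (fun k => M k j) ⬝ᵥ H *ᵥ (fun k => M k j) = 0 := by
    have := congrFun₂ h j j
    simp only [mul_apply, Finset.sum_mul, mul_assoc] at this
    rw [Finset.sum_comm] at this
    simpa [dotProduct, mulVec, Finset.mul_sum] using this
  simpa [mulVec, dotProduct, mul_apply] using
    congrFun ((hH.dotProduct_mulVec_zero_iff _).mp hcol) i

open scoped MatrixOrder in
lemma PosSemidef.map_ofReal [DecidableEq m] {A : Matrix m m ℝ} (hA : A.PosSemidef) :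
    (A.map ((↑) : ℝ → ℂ)).PosSemidef := by
  set B := CFC.sqrt A
  have hB : Bᴴ = B := (CFC.sqrt_nonneg A).isSelfAdjoint.star_eq
  have hA' : A.map ((↑) : ℝ → ℂ) = (B.map (↑))ᴴ * B.map (↑) := by
    rw [← CFC.sqrt_mul_sqrt_self A hA.nonneg]
    nth_rw 1 [← hB]
    ext i j; simp [mul_apply, B]
  rw [hA']
  exact posSemidef_conjTranspose_mul_self _

lemma PosSemidef.mul_eq_zero_of_add_I_smul_mul_eq_zero {H K : Matrix m m ℂ} (hH : H.PosSemidef)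
    (hK : K.IsHermitian) {M : Matrix m n ℂ} (h : (H + I • K) * M = 0) : H * M = 0 := by
  refine hH.mul_eq_zero_of_conjTranspose_mul_mul_eq_zero ?_
  refine (isHermitian_conjTranspose_mul_mul M hH.1).eq_zero_of_add_I_smul_eq_zero
    (isHermitian_conjTranspose_mul_mul M hK) ?_
  have hMHM : Mᴴ * ((H + I • K) * M) = 0 := by rw [h, Matrix.mul_zero]
  simpa [Matrix.mul_add, Matrix.add_mul, Matrix.mul_assoc] using hMHM

theorem IsSymm.map_re_im_mul_mul_eq_zero [DecidableEq m] {A : Matrix m m ℂ} (hA : A.IsSymm)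
    (hre : (A.map re).PosSemidef) {T : Matrix m m ℝ} (h : A * T.map (↑) * A = 0) :
    A.map re * T * A.map re = 0 ∧ A.map re * T * A.map im = 0 ∧
      A.map im * T * A.map re = 0 ∧ A.map im * T * A.map im = 0 := by
  have hsplit := map_re_add_I_smul_map_im A
  have him : ((A.map im).map ((↑) : ℝ → ℂ)).IsHermitian :=
    IsHermitian.map (by simpa using hA.map im) _ fun _ => (conj_ofReal _).symm
  have hreTA : (A.map re).map (↑) * (T.map (↑) * A) = 0 :=
    hre.map_ofReal.mul_eq_zero_of_add_I_smul_mul_eq_zero him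
      (by rw [hsplit, ← Matrix.mul_assoc, h])
  have himTA : (A.map im).map (↑) * (T.map (↑) * A) = 0 := by
    refine (smul_eq_zero.mp ?_).resolve_left I_ne_zero
    rw [← smul_mul_assoc, eq_sub_of_add_eq' hsplit, Matrix.sub_mul, hreTA, ← Matrix.mul_assoc, h,
      sub_zero]
  have parts : ∀ P : Matrix m m ℝ, P.map (↑) * (T.map (↑) * A) = 0 →
      P * T * A.map re = 0 ∧ P * T * A.map im = 0 := by
    intro P hP
    exact ⟨by simpa [Matrix.mul_assoc, map_re_map_ofReal_mul] using congrArg (·.map re) hP,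
      by simpa [Matrix.mul_assoc, map_im_map_ofReal_mul] using congrArg (·.map im) hP⟩
  exact ⟨(parts _ hreTA).1, (parts _ hreTA).2, (parts _ himTA).1, (parts _ himTA).2⟩

end Matrix

lemma JmatR_map_ofReal (n : ℕ) : (JmatR n).map ((↑) : ℝ → ℂ) = Jmat n := by
  ext (i | i) (j | j) <;> simp [JmatR, Jmat, one_apply, apply_ite]

lemma JmatR_mul_JmatR (n : ℕ) : JmatR n * JmatR n = -1 := by
  simp [JmatR, fromBlocks_multiply, fromBlocks_neg, ← fromBlocks_one]

lemma transpose_JmatR (n : ℕ) : (JmatR n)ᵀ = -JmatR n := by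
  simp [JmatR, fromBlocks_transpose, fromBlocks_neg]

lemma Jmat_mul_Jmat (n : ℕ) : Jmat n * Jmat n = -1 := by
  simp [Jmat, fromBlocks_multiply, fromBlocks_neg, ← fromBlocks_one]

lemma transpose_Jmat (n : ℕ) : (Jmat n)ᵀ = -Jmat n := by
  simp [Jmat, fromBlocks_transpose, fromBlocks_neg]

lemma InSp.isSymm_Jmat_mul {n : ℕ} {N : Matrix (Idx n) (Idx n) ℂ} (hN : InSp n N) :
    (Jmat n * N).IsSymm := by
  rw [IsSymm, transpose_mul, transpose_Jmat, Matrix.mul_neg, eq_neg_of_add_eq_zero_left hN,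
    neg_neg]

lemma RePosQ.posSemidef_map_re_Jmat_mul {n : ℕ} {N : Matrix (Idx n) (Idx n) ℂ} (hN : InSp n N)
    (hpos : RePosQ n N) : ((Jmat n * N).map re).PosSemidef := by
  refine .of_dotProduct_mulVec_nonneg (by simpa using hN.isSymm_Jmat_mul.map re) fun v => ?_
  rw [star_trivial, ← re_ofReal_dotProduct_mulVec_ofReal]
  have hv := hpos v
  rw [sigmaC, mulVec_mulVec] at hv
  exact hv

lemma hamiltonian_JmatR_mul_of_isSymm {n : ℕ} {P : Matrix (Idx n) (Idx n) ℝ}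
    (hP : P.IsSymm) : (JmatR n * P)ᵀ * JmatR n + JmatR n * (JmatR n * P) = 0 := by
  rw [transpose_mul, hP.eq, transpose_JmatR, Matrix.mul_assoc, ← Matrix.mul_assoc (JmatR n),
    Matrix.neg_mul, JmatR_mul_JmatR]
  simp

/-- if `N ∈ sp(n,ℂ)`, `N² = 0` and `Re Q_N ≥ 0`, then
`N₁² = N₂² = N₁N₂ = N₂N₁ = 0`; in particular `N₁` and `N₂` are 2-step nilpotent real
Hamiltonian maps. -/
theorem statement11 (n : ℕ) (N : Matrix (Idx n) (Idx n) ℂ)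
    (hN : InSp n N) (hN2 : N * N = 0) (hpos : RePosQ n N) :
    (N.map Complex.re) * (N.map Complex.re) = 0 ∧
    (N.map Complex.im) * (N.map Complex.im) = 0 ∧
    (N.map Complex.re) * (N.map Complex.im) = 0 ∧
    (N.map Complex.im) * (N.map Complex.re) = 0 ∧
    (N.map Complex.re)ᵀ * JmatR n + JmatR n * (N.map Complex.re) = 0 ∧
    (N.map Complex.im)ᵀ * JmatR n + JmatR n * (N.map Complex.im) = 0 := by
  have hAJA : Jmat n * N * (JmatR n).map (↑) * (Jmat n * N) = 0 := by
    simp only [JmatR_map_ofReal, Matrix.mul_assoc]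
    rw [← Matrix.mul_assoc (Jmat n) (Jmat n), Jmat_mul_Jmat]
    simp [hN2]
  obtain ⟨hRR, hRS, hSR, hSS⟩ :=
    hN.isSymm_Jmat_mul.map_re_im_mul_mul_eq_zero (hpos.posSemidef_map_re_Jmat_mul hN) hAJA
  have hNA : N = (JmatR n).map (↑) * -(Jmat n * N) := by
    rw [JmatR_map_ofReal, Matrix.mul_neg, ← Matrix.mul_assoc, Jmat_mul_Jmat]
    simp
  have hre : N.map re = JmatR n * -(Jmat n * N).map re := by
    rw [congrArg (·.map re) hNA, map_re_map_ofReal_mul, Matrix.map_neg _ fun _ => neg_re _]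
  have him : N.map im = JmatR n * -(Jmat n * N).map im := by
    rw [congrArg (·.map im) hNA, map_im_map_ofReal_mul, Matrix.map_neg _ fun _ => neg_im _]
  simp only [Matrix.mul_assoc] at hRR hRS hSR hSS
  rw [hre, him]
  refine ⟨?_, ?_, ?_, ?_, hamiltonian_JmatR_mul_of_isSymm (hN.isSymm_Jmat_mul.map re).neg,
    hamiltonian_JmatR_mul_of_isSymm (hN.isSymm_Jmat_mul.map im).neg⟩ <;>
  simp [Matrix.mul_assoc, hRR, hRS, hSR, hSS]
end
end

section
/- Let S ∈ sp(n,ℂ) with Re Q_S ≥ 0, and let t ≥ 0 be such that det(cos(2πtS)) ≠ 0. Then Re σ(w, tan(2πtS)w) ≥ 0 for every w ∈ ℝ^{2n}. -/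
open MeasureTheory Complex Matrix

noncomputable section

/-- The matrix exponential `exp M = Σ M^k / k!`. -/
def matExp {ι : Type} [Fintype ι] [DecidableEq ι] (M : Matrix ι ι ℂ) : Matrix ι ι ℂ :=
  ∑' k : ℕ, ((k.factorial : ℂ)⁻¹) • M ^ k

/-- The matrix cosine `cos M = (exp(iM) + exp(-iM))/2`. -/
def matCos {ι : Type} [Fintype ι] [DecidableEq ι] (M : Matrix ι ι ℂ) : Matrix ι ι ℂ :=
  (2 : ℂ)⁻¹ • (matExp (Complex.I • M) + matExp (-(Complex.I • M)))

/-- The matrix sine `sin M = (exp(iM) - exp(-iM))/(2i)`. -/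
def matSin {ι : Type} [Fintype ι] [DecidableEq ι] (M : Matrix ι ι ℂ) : Matrix ι ι ℂ :=
  (2 * Complex.I)⁻¹ • (matExp (Complex.I • M) - matExp (-(Complex.I • M)))

/-- The matrix tangent `tan M = (sin M)(cos M)⁻¹` (junk value if `cos M` is singular). -/
def matTan {ι : Type} [Fintype ι] [DecidableEq ι] (M : Matrix ι ι ℂ) : Matrix ι ι ℂ :=
  matSin M * (matCos M)⁻¹

namespace St13
variable {n : ℕ}

def matConj (M : Matrix (Idx n) (Idx n) ℂ) : Matrix (Idx n) (Idx n) ℂ :=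
  M.map (starRingEnd ℂ)

lemma Jmat_transpose : (Jmat n)ᵀ = -(Jmat n) := by
  simp [Jmat, Matrix.fromBlocks_transpose, Matrix.fromBlocks_neg]

lemma Jmat_mul_Jmat : Jmat n * Jmat n = -1 := by
  simp [Jmat, Matrix.fromBlocks_multiply, Matrix.fromBlocks_neg, ← Matrix.fromBlocks_one]

lemma matConj_J : matConj (Jmat n) = Jmat n := by
  ext i j
  rcases i with i | i <;> rcases j with j | j <;>
    simp [matConj, Jmat, Matrix.fromBlocks, Matrix.one_apply] <;>
    split <;> simp

lemma matConj_mul (M N : Matrix (Idx n) (Idx n) ℂ) :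
    matConj (M * N) = matConj M * matConj N := Matrix.map_mul

lemma matConj_add (M N : Matrix (Idx n) (Idx n) ℂ) :
    matConj (M + N) = matConj M + matConj N := Matrix.map_add _ (fun a b => map_add _ a b) _ _

lemma matConj_transpose (M : Matrix (Idx n) (Idx n) ℂ) :
    matConj (Mᵀ) = (matConj M)ᵀ := Matrix.transpose_map

lemma matConj_neg (M : Matrix (Idx n) (Idx n) ℂ) : matConj (-M) = -(matConj M) := by
  ext i j; simp [matConj]

lemma matConj_zero : matConj (0 : Matrix (Idx n) (Idx n) ℂ) = 0 := by
  ext i j; simp [matConj]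

lemma matConj_real_smul (r : ℝ) (M : Matrix (Idx n) (Idx n) ℂ) :
    matConj ((r : ℂ) • M) = (r : ℂ) • matConj M := by
  ext i j; simp [matConj]

lemma matConj_mulVec (M : Matrix (Idx n) (Idx n) ℂ) (z : Idx n → ℂ) :
    (matConj M) *ᵥ (conjVec n z) = conjVec n (M *ᵥ z) := by
  funext i
  simp [matConj, conjVec, Matrix.mulVec, dotProduct, map_sum]

lemma conjVec_realVec (v : Idx n → ℝ) : conjVec n (realVec n v) = realVec n v := by
  funext i; simp [conjVec, realVec]

lemma conj_dot (x y : Idx n → ℂ) :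
    (starRingEnd ℂ) (x ⬝ᵥ y) = conjVec n x ⬝ᵥ conjVec n y := by
  simp [conjVec, dotProduct, map_sum]

lemma dot_shift (M : Matrix (Idx n) (Idx n) ℂ) (a b : Idx n → ℂ) :
    a ⬝ᵥ (M *ᵥ b) = (Mᵀ *ᵥ a) ⬝ᵥ b := by
  rw [dotProduct_mulVec, Matrix.mulVec_transpose]


lemma real_dot_conj (M : Matrix (Idx n) (Idx n) ℂ) (u : Idx n → ℝ) :
    (realVec n u) ⬝ᵥ ((matConj M) *ᵥ realVec n u)
      = (starRingEnd ℂ) ((realVec n u) ⬝ᵥ (M *ᵥ realVec n u)) := by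
  simp [matConj, realVec, Matrix.mulVec, dotProduct, map_sum, Finset.mul_sum,
    mul_comm, mul_left_comm]

lemma key_pos (S : Matrix (Idx n) (Idx n) ℂ) (hS : InSp n S) (hpos : RePosQ n S)
    (ζ : Idx n → ℂ) :
    0 ≤ ((conjVec n ζ) ⬝ᵥ ((Jmat n * (S + matConj S)) *ᵥ ζ)).re := by
  set J := Jmat n
  set R := S + matConj S with hRdef
  set K := J * R with hKdef
  -- R is in sp
  have hS' : Sᵀ * J + J * S = 0 := hS
  have hSb : (matConj S)ᵀ * J + J * matConj S = 0 := by
    have := congrArg matConj hS'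
    rw [matConj_add, matConj_mul, matConj_mul, matConj_J, matConj_transpose] at this
    simpa [matConj] using this
  have hR : Rᵀ * J + J * R = 0 := by
    rw [hRdef, Matrix.transpose_add, Matrix.add_mul, Matrix.mul_add]
    calc Sᵀ * J + (matConj S)ᵀ * J + (J * S + J * matConj S)
        = (Sᵀ * J + J * S) + ((matConj S)ᵀ * J + J * matConj S) := by abel
      _ = 0 := by rw [hS', hSb, add_zero]
  have hKsymm : Kᵀ = K := by
    rw [hKdef, Matrix.transpose_mul, Jmat_transpose]
    have h1 : Rᵀ * J = -(J * R) := by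
      have := hR; linear_combination (norm := noncomm_ring) this
    rw [Matrix.mul_neg, h1, neg_neg]
  -- decompose ζ
  set u : Idx n → ℝ := fun i => (ζ i).re with hu
  set v : Idx n → ℝ := fun i => (ζ i).im with hv
  set a := realVec n u
  set b := realVec n v
  have hζ : ζ = a + Complex.I • b := by
    funext i
    simp [a, b, realVec, hu, hv, Complex.ext_iff]
  have hζc : conjVec n ζ = a - Complex.I • b := by
    funext i
    simp [a, b, conjVec, realVec, hu, hv, Complex.ext_iff]
  -- cross symmetric
  have hcross : a ⬝ᵥ (K *ᵥ b) = b ⬝ᵥ (K *ᵥ a) := by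
    rw [dot_shift, hKsymm, dotProduct_comm]
  have expand : (conjVec n ζ) ⬝ᵥ (K *ᵥ ζ)
      = a ⬝ᵥ (K *ᵥ a) + b ⬝ᵥ (K *ᵥ b)
        + Complex.I * (a ⬝ᵥ (K *ᵥ b) - b ⬝ᵥ (K *ᵥ a)) := by
    rw [hζc, hζ]
    simp only [Matrix.mulVec_add, Matrix.mulVec_smul, dotProduct_add,
      sub_dotProduct, smul_dotProduct, dotProduct_smul,
      smul_eq_mul]
    ring_nf
    simp [Complex.I_sq]
  rw [expand, hcross, sub_self, mul_zero, add_zero]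
  -- each part
  have part : ∀ x : Idx n → ℝ, 0 ≤ ((realVec n x) ⬝ᵥ (K *ᵥ realVec n x)).re := by
    intro x
    have hKx : K *ᵥ realVec n x = (J * S) *ᵥ realVec n x + (matConj (J * S)) *ᵥ realVec n x := by
      rw [hKdef, hRdef, Matrix.mul_add, Matrix.add_mulVec, matConj_mul, matConj_J]
    rw [hKx, dotProduct_add, Complex.add_re, real_dot_conj]
    have h1 : 0 ≤ ((realVec n x) ⬝ᵥ ((J * S) *ᵥ realVec n x)).re := by
      have := hpos x
      simpa [sigmaC, Matrix.mulVec_mulVec, J] using this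
    simpa [Complex.conj_re] using add_nonneg h1 h1
  have := part u
  have := part v
  rw [Complex.add_re]
  exact add_nonneg (part u) (part v)

attribute [local instance] Matrix.linftyOpNormedRing Matrix.linftyOpNormedAlgebra

theorem matExp_eq {ι : Type} [Fintype ι] [DecidableEq ι] (M : Matrix ι ι ℂ) :
    matExp M = NormedSpace.exp M := by
  rw [NormedSpace.exp_eq_tsum ℝ]
  exact tsum_congr fun k => by
    rw [show ((k.factorial : ℂ))⁻¹ = algebraMap ℝ ℂ ((k.factorial : ℝ))⁻¹ by push_cast; simp,
      algebraMap_smul]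

/-- the symplectic unit -/
def Ju : (Matrix (Idx n) (Idx n) ℂ)ˣ where
  val := Jmat n
  inv := -(Jmat n)
  val_inv := by rw [Matrix.mul_neg, Jmat_mul_Jmat, neg_neg]
  inv_val := by rw [Matrix.neg_mul, Jmat_mul_Jmat, neg_neg]

theorem expSp (M : Matrix (Idx n) (Idx n) ℂ) (hM : Mᵀ * Jmat n + Jmat n * M = 0) :
    (NormedSpace.exp M)ᵀ * Jmat n = Jmat n * NormedSpace.exp (-M) := by
  have hMT : Mᵀ = ((Ju (n := n) : (Matrix (Idx n) (Idx n) ℂ)ˣ) : Matrix (Idx n) (Idx n) ℂ) * (-M) * (↑((Ju (n := n))⁻¹) : Matrix (Idx n) (Idx n) ℂ) := by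
    show Mᵀ = Jmat n * (-M) * (-(Jmat n))
    have h1 : Mᵀ * Jmat n = -(Jmat n * M) := by linear_combination (norm := noncomm_ring) hM
    have h2 : Mᵀ * (Jmat n * Jmat n) = -(Jmat n * M) * Jmat n := by
      rw [← Matrix.mul_assoc, h1]
    rw [Jmat_mul_Jmat] at h2
    have h3 : Mᵀ = Jmat n * (M * Jmat n) := by
      have := congrArg Neg.neg h2
      simpa [Matrix.mul_neg, Matrix.neg_mul, neg_neg, Matrix.mul_assoc] using this
    rw [h3]; noncomm_ring
  have := Matrix.exp_units_conj (Ju (n := n)) (-M)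
  rw [← hMT] at this
  rw [← Matrix.exp_transpose, this]
  show Jmat n * NormedSpace.exp (-M) * (-(Jmat n)) * Jmat n = _
  rw [Matrix.mul_assoc, Matrix.neg_mul, Jmat_mul_Jmat, neg_neg, Matrix.mul_one]



/-- `matConj` as a continuous `ℝ`-linear map. -/
def matConjL : Matrix (Idx n) (Idx n) ℂ →L[ℝ] Matrix (Idx n) (Idx n) ℂ :=
  LinearMap.toContinuousLinearMap
    { toFun := matConj
      map_add' := matConj_add
      map_smul' := fun r M => by ext i j; simp [matConj] }

lemma aux1 (X Y B : Matrix (Idx n) (Idx n) ℂ) :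
    -(((2*Complex.I)⁻¹ • (X - Y)) * B)
      = (2:ℂ)⁻¹ • (X * (Complex.I • B) + Y * (-(Complex.I • B))) := by
  have hscal1 : -((2*Complex.I)⁻¹) = (2:ℂ)⁻¹ * Complex.I := by
    rw [mul_inv, Complex.inv_I]; ring
  rw [mul_neg, mul_smul_comm, mul_smul_comm, ← sub_eq_add_neg, ← smul_sub, smul_smul,
    smul_mul_assoc, sub_mul, ← neg_smul, hscal1]

lemma aux2 (X Y B : Matrix (Idx n) (Idx n) ℂ) :
    ((2:ℂ)⁻¹ • (X + Y)) * B
      = (2*Complex.I)⁻¹ • (X * (Complex.I • B) - Y * (-(Complex.I • B))) := by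
  have hscal2 : (2*Complex.I)⁻¹ * Complex.I = (2:ℂ)⁻¹ := by
    rw [mul_inv, Complex.inv_I]
    have h : Complex.I * Complex.I = -1 := Complex.I_mul_I
    calc 2⁻¹ * -Complex.I * Complex.I = 2⁻¹ * -(Complex.I * Complex.I) := by ring
      _ = (2:ℂ)⁻¹ := by rw [h]; ring
  rw [mul_neg, sub_neg_eq_add, mul_smul_comm, mul_smul_comm, ← smul_add, smul_smul,
    smul_mul_assoc, add_mul, hscal2]

lemma matConjL_apply (M : Matrix (Idx n) (Idx n) ℂ) : matConjL M = matConj M := rfl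

end St13

attribute [local instance] Matrix.linftyOpNormedRing Matrix.linftyOpNormedAlgebra

open St13 in
set_option maxHeartbeats 2000000 in
/-- if `Re Q_S ≥ 0`, `t ≥ 0` and `det cos(2πtS) ≠ 0`, then
`Re σ(w, tan(2πtS) w) ≥ 0` for every `w ∈ ℝ^{2n}`. -/
theorem statement13 (n : ℕ) (S : Matrix (Idx n) (Idx n) ℂ)
    (hS : InSp n S) (hpos : RePosQ n S) (t : ℝ) (ht : 0 ≤ t)
    (hdet : (matCos (((2 * Real.pi * t : ℝ) : ℂ) • S)).det ≠ 0) :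
    ∀ w : Idx n → ℝ,
      0 ≤ (sigmaC n (realVec n w)
        ((matTan (((2 * Real.pi * t : ℝ) : ℂ) • S)).mulVec (realVec n w))).re := by
  intro w
  set J : Matrix (Idx n) (Idx n) ℂ := Jmat n with hJ
  set c : ℝ := 2 * Real.pi * t with hcdef
  have hc0 : (0:ℝ) ≤ c := by
    have := Real.pi_pos
    rw [hcdef]; positivity
  set A : Matrix (Idx n) (Idx n) ℂ := ((c : ℝ) : ℂ) • S with hAdef
  have hS' : Sᵀ * J + J * S = 0 := hS
  have hA : Aᵀ * J + J * A = 0 := by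
    rw [hAdef, Matrix.transpose_smul, Matrix.smul_mul, Matrix.mul_smul, ← smul_add, hS',
      smul_zero]
  set x₁ : Matrix (Idx n) (Idx n) ℂ := Complex.I • A with hx₁def
  set x₂ : Matrix (Idx n) (Idx n) ℂ := -x₁ with hx₂def
  have hspR : ∀ (M : Matrix (Idx n) (Idx n) ℂ), Mᵀ * J + J * M = 0 →
      ∀ s : ℝ, (s • M)ᵀ * J + J * (s • M) = 0 := by
    intro M hM s
    rw [Matrix.transpose_smul, Matrix.smul_mul, Matrix.mul_smul, ← smul_add, hM, smul_zero]
  have hx₁sp : x₁ᵀ * J + J * x₁ = 0 := by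
    rw [hx₁def, Matrix.transpose_smul, Matrix.smul_mul, Matrix.mul_smul, ← smul_add, hA,
      smul_zero]
  have hx₂sp : x₂ᵀ * J + J * x₂ = 0 := by
    rw [hx₂def, Matrix.transpose_neg, Matrix.neg_mul, Matrix.mul_neg, ← neg_add, hx₁sp,
      neg_zero]
  have hs21 : ∀ s : ℝ, -(s • x₁) = s • x₂ := by
    intro s; rw [hx₂def, smul_neg]
  have hs12 : ∀ s : ℝ, -(s • x₂) = s • x₁ := by
    intro s; rw [hx₂def, smul_neg, neg_neg]
  set P : ℝ → Matrix (Idx n) (Idx n) ℂ := fun s => NormedSpace.exp (s • x₁) with hPdef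
  set Q : ℝ → Matrix (Idx n) (Idx n) ℂ := fun s => NormedSpace.exp (s • x₂) with hQdef
  have hPT : ∀ s, (P s)ᵀ * J = J * Q s := by
    intro s
    have h := expSp (s • x₁) (hspR x₁ hx₁sp s)
    rw [hs21 s] at h
    exact h
  have hQT : ∀ s, (Q s)ᵀ * J = J * P s := by
    intro s
    have h := expSp (s • x₂) (hspR x₂ hx₂sp s)
    rw [hs12 s] at h
    exact h
  set Cn : ℝ → Matrix (Idx n) (Idx n) ℂ := fun s => (2:ℂ)⁻¹ • (P s + Q s) with hCndef
  set Sn : ℝ → Matrix (Idx n) (Idx n) ℂ := fun s => (2 * Complex.I)⁻¹ • (P s - Q s) with hSndef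
  set Ab : Matrix (Idx n) (Idx n) ℂ := matConj A with hAbdef
  set Cb : ℝ → Matrix (Idx n) (Idx n) ℂ := fun s => matConj (Cn s) with hCbdef
  set Sb : ℝ → Matrix (Idx n) (Idx n) ℂ := fun s => matConj (Sn s) with hSbdef
  -- transpose relations
  have hCnT : ∀ s, (Cn s)ᵀ * J = J * Cn s := by
    intro s
    have h1 : (P s + Q s)ᵀ * J = J * (P s + Q s) := by
      rw [Matrix.transpose_add, Matrix.add_mul, hPT s, hQT s, Matrix.mul_add, add_comm]
    show ((2:ℂ)⁻¹ • (P s + Q s))ᵀ * J = J * ((2:ℂ)⁻¹ • (P s + Q s))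
    rw [Matrix.transpose_smul, Matrix.smul_mul, h1, Matrix.mul_smul]
  have hSnT : ∀ s, (Sn s)ᵀ * J = -(J * Sn s) := by
    intro s
    have h1 : (P s - Q s)ᵀ * J = -(J * (P s - Q s)) := by
      rw [Matrix.transpose_sub, Matrix.sub_mul, hPT s, hQT s, Matrix.mul_sub, neg_sub]
    show ((2*Complex.I)⁻¹ • (P s - Q s))ᵀ * J = -(J * ((2*Complex.I)⁻¹ • (P s - Q s)))
    rw [Matrix.transpose_smul, Matrix.smul_mul, h1, Matrix.mul_smul, smul_neg]
  have hCbT : ∀ s, (Cb s)ᵀ * J = J * Cb s := by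
    intro s
    have := congrArg matConj (hCnT s)
    rw [matConj_mul, matConj_mul, matConj_J, matConj_transpose] at this
    exact this
  have hSbT : ∀ s, (Sb s)ᵀ * J = -(J * Sb s) := by
    intro s
    have := congrArg matConj (hSnT s)
    rw [matConj_mul, matConj_neg, matConj_mul, matConj_J, matConj_transpose] at this
    exact this
  -- commutation with A
  have hcommP : ∀ s, Commute A (P s) := by
    intro s
    have h1 : Commute A x₁ := (Commute.refl A).smul_right Complex.I
    exact ((h1.smul_right s).exp_right)
  have hcommQ : ∀ s, Commute A (Q s) := by
    intro s
    have h1 : Commute A x₂ := ((Commute.refl A).smul_right Complex.I).neg_right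
    exact ((h1.smul_right s).exp_right)
  have hCnA : ∀ s, Cn s * A = A * Cn s := by
    intro s
    exact (((hcommP s).add_right (hcommQ s)).smul_right ((2:ℂ)⁻¹)).symm.eq
  have hSnA : ∀ s, Sn s * A = A * Sn s := by
    intro s
    exact (((hcommP s).sub_right (hcommQ s)).smul_right ((2*Complex.I)⁻¹)).symm.eq
  -- derivatives
  have hP' : ∀ s, HasDerivAt P (P s * x₁) s := fun s => hasDerivAt_exp_smul_const x₁ s
  have hQ' : ∀ s, HasDerivAt Q (Q s * x₂) s := fun s => hasDerivAt_exp_smul_const x₂ s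
  have hCn' : ∀ s, HasDerivAt Cn (-(Sn s * A)) s := by
    intro s
    have h := ((hP' s).add (hQ' s)).const_smul ((2:ℂ)⁻¹)
    refine h.congr_deriv ?_
    exact (aux1 (P s) (Q s) A).symm
  have hSn' : ∀ s, HasDerivAt Sn (Cn s * A) s := by
    intro s
    have h := ((hP' s).sub (hQ' s)).const_smul ((2*Complex.I)⁻¹)
    refine h.congr_deriv ?_
    exact (aux2 (P s) (Q s) A).symm
  have hCb' : ∀ s, HasDerivAt Cb (-(Sb s * Ab)) s := by
    intro s
    have h := (matConjL (n := n)).hasFDerivAt.comp_hasDerivAt s (hCn' s)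
    have h2 : (⇑(matConjL (n := n)) ∘ Cn) = Cb := by
      funext u; simp [Function.comp, matConjL_apply, hCbdef]
    rw [h2] at h
    refine h.congr_deriv ?_
    exact (matConj_neg _).trans (congrArg Neg.neg (matConj_mul _ _))
  have hSb' : ∀ s, HasDerivAt Sb (Cb s * Ab) s := by
    intro s
    have h := (matConjL (n := n)).hasFDerivAt.comp_hasDerivAt s (hSn' s)
    have h2 : (⇑(matConjL (n := n)) ∘ Sn) = Sb := by
      funext u; simp [Function.comp, matConjL_apply, hSbdef]
    rw [h2] at h
    refine h.congr_deriv ?_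
    exact matConj_mul _ _
  set Φ : ℝ → Matrix (Idx n) (Idx n) ℂ := fun s => Cb s * Sn s + Sb s * Cn s with hΦdef
  set D : ℝ → Matrix (Idx n) (Idx n) ℂ := fun s =>
    ((-(Sb s * Ab)) * Sn s + Cb s * (Cn s * A)) + ((Cb s * Ab) * Cn s + Sb s * (-(Sn s * A)))
    with hDdef
  have hΦ' : ∀ s, HasDerivAt Φ (D s) s := by
    intro s
    exact ((hCb' s).mul (hSn' s)).add ((hSb' s).mul (hCn' s))
  -- the matrix identity for J * D s
  set K : Matrix (Idx n) (Idx n) ℂ := J * (A + Ab) with hKdef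
  have hJD : ∀ s, J * D s = (Cb s)ᵀ * (K * Cn s) + (Sb s)ᵀ * (K * Sn s) := by
    intro s
    have e1 : ∀ X, J * (Cb s * X) = (Cb s)ᵀ * (J * X) := by
      intro X; rw [← Matrix.mul_assoc, ← hCbT s, Matrix.mul_assoc]
    have e2 : ∀ X, J * (Sb s * X) = -((Sb s)ᵀ * (J * X)) := by
      intro X
      have h2 : J * Sb s = -((Sb s)ᵀ * J) := by rw [hSbT s, neg_neg]
      rw [← Matrix.mul_assoc, h2, Matrix.neg_mul, Matrix.mul_assoc]
    simp only [hDdef, hKdef, Matrix.mul_add, Matrix.add_mul, Matrix.mul_neg, Matrix.neg_mul,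
      Matrix.mul_assoc, e1, e2, neg_neg, hCnA s, hSnA s]
    abel
  -- the vector z and the linear functional
  set W : Idx n → ℂ := realVec n w with hWdef
  set z : Idx n → ℂ := (matCos A)⁻¹ *ᵥ W with hzdef
  set zb : Idx n → ℂ := conjVec n z with hzbdef
  have hCos1 : matCos A = Cn 1 := by
    show (2:ℂ)⁻¹ • (matExp (Complex.I • A) + matExp (-(Complex.I • A))) = _
    rw [matExp_eq, matExp_eq]
    show _ = (2:ℂ)⁻¹ • (NormedSpace.exp ((1:ℝ) • x₁) + NormedSpace.exp ((1:ℝ) • x₂))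
    rw [one_smul, one_smul, hx₂def, hx₁def]
  have hSin1 : matSin A = Sn 1 := by
    show (2*Complex.I)⁻¹ • (matExp (Complex.I • A) - matExp (-(Complex.I • A))) = _
    rw [matExp_eq, matExp_eq]
    show _ = (2*Complex.I)⁻¹ • (NormedSpace.exp ((1:ℝ) • x₁) - NormedSpace.exp ((1:ℝ) • x₂))
    rw [one_smul, one_smul, hx₂def, hx₁def]
  have hdetU : IsUnit (matCos A).det := isUnit_iff_ne_zero.mpr hdet
  have hCz : Cn 1 *ᵥ z = W := by
    rw [hzdef, ← hCos1, Matrix.mulVec_mulVec, Matrix.mul_nonsing_inv _ hdetU,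
      Matrix.one_mulVec]
  have hSz : Sn 1 *ᵥ z = matTan A *ᵥ W := by
    rw [hzdef, ← hSin1, Matrix.mulVec_mulVec]
    rfl
  have hconjW : conjVec n W = W := by rw [hWdef]; exact conjVec_realVec w
  -- helpers to move conjugated matrices across the form
  have helperC : ∀ (s : ℝ) (Y : Idx n → ℂ),
      zb ⬝ᵥ ((Cb s)ᵀ *ᵥ Y) = conjVec n (Cn s *ᵥ z) ⬝ᵥ Y := by
    intro s Y
    rw [dot_shift, Matrix.transpose_transpose]
    congr 1
    show matConj (Cn s) *ᵥ zb = _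
    rw [hzbdef, matConj_mulVec]
  have helperS : ∀ (s : ℝ) (Y : Idx n → ℂ),
      zb ⬝ᵥ ((Sb s)ᵀ *ᵥ Y) = conjVec n (Sn s *ᵥ z) ⬝ᵥ Y := by
    intro s Y
    rw [dot_shift, Matrix.transpose_transpose]
    congr 1
    show matConj (Sn s) *ᵥ zb = _
    rw [hzbdef, matConj_mulVec]
  -- positivity of the derivative
  have hK : K = ((c:ℝ):ℂ) • (J * (S + matConj S)) := by
    rw [hKdef, hAbdef, hAdef, matConj_real_smul, ← smul_add, Matrix.mul_smul]
  have posgen : ∀ ζ : Idx n → ℂ, 0 ≤ (conjVec n ζ ⬝ᵥ (K *ᵥ ζ)).re := by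
    intro ζ
    rw [hK, Matrix.smul_mulVec, dotProduct_smul, smul_eq_mul,
      Complex.re_ofReal_mul]
    exact mul_nonneg hc0 (key_pos S hS hpos ζ)
  have hρ : ∀ s, 0 ≤ (zb ⬝ᵥ ((J * D s) *ᵥ z)).re := by
    intro s
    rw [hJD s, Matrix.add_mulVec, dotProduct_add, Complex.add_re]
    have t1 : zb ⬝ᵥ (((Cb s)ᵀ * (K * Cn s)) *ᵥ z)
        = conjVec n (Cn s *ᵥ z) ⬝ᵥ (K *ᵥ (Cn s *ᵥ z)) := by
      rw [← Matrix.mulVec_mulVec, helperC s, ← Matrix.mulVec_mulVec]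
    have t2 : zb ⬝ᵥ (((Sb s)ᵀ * (K * Sn s)) *ᵥ z)
        = conjVec n (Sn s *ᵥ z) ⬝ᵥ (K *ᵥ (Sn s *ᵥ z)) := by
      rw [← Matrix.mulVec_mulVec, helperS s, ← Matrix.mulVec_mulVec]
    rw [t1, t2]
    exact add_nonneg (posgen _) (posgen _)
  -- the scalar function G and its derivative
  set Lfun : Matrix (Idx n) (Idx n) ℂ →ₗ[ℝ] ℝ :=
    { toFun := fun M => (zb ⬝ᵥ ((J * M) *ᵥ z)).re
      map_add' := by
        intro M N
        rw [Matrix.mul_add, Matrix.add_mulVec, dotProduct_add, Complex.add_re]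
      map_smul' := by
        intro r M
        simp only [Matrix.mul_smul, Matrix.smul_mulVec, dotProduct_smul,
          Complex.smul_re, RingHom.id_apply, smul_eq_mul] } with hLfun
  set Lr : Matrix (Idx n) (Idx n) ℂ →L[ℝ] ℝ := LinearMap.toContinuousLinearMap Lfun with hLrdef
  set G : ℝ → ℝ := fun s => (zb ⬝ᵥ ((J * Φ s) *ᵥ z)).re with hGdef
  have hG' : ∀ s, HasDerivAt G ((zb ⬝ᵥ ((J * D s) *ᵥ z)).re) s := by
    intro s
    exact Lr.hasFDerivAt.comp_hasDerivAt s (hΦ' s)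
  -- endpoints
  have hG0 : G 0 = 0 := by
    have hP0 : P 0 = 1 := by
      show NormedSpace.exp ((0:ℝ) • x₁) = 1
      rw [zero_smul, NormedSpace.exp_zero]
    have hQ0 : Q 0 = 1 := by
      show NormedSpace.exp ((0:ℝ) • x₂) = 1
      rw [zero_smul, NormedSpace.exp_zero]
    have hSn0 : Sn 0 = 0 := by
      show (2*Complex.I)⁻¹ • (P 0 - Q 0) = 0
      rw [hP0, hQ0, sub_self, smul_zero]
    have hΦ0 : Φ 0 = 0 := by
      show Cb 0 * Sn 0 + Sb 0 * Cn 0 = 0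
      have hSb0 : Sb 0 = 0 := by
        show matConj (Sn 0) = 0
        rw [hSn0, matConj_zero]
      rw [hSn0, hSb0, Matrix.mul_zero, Matrix.zero_mul, add_zero]
    show (zb ⬝ᵥ ((J * Φ 0) *ᵥ z)).re = 0
    rw [hΦ0, Matrix.mul_zero, Matrix.zero_mulVec, dotProduct_zero, Complex.zero_re]
  have hJΦ1 : J * Φ 1 = (Cb 1)ᵀ * (J * Sn 1) + -((Sb 1)ᵀ * (J * Cn 1)) := by
    have e1 : J * (Cb 1 * Sn 1) = (Cb 1)ᵀ * (J * Sn 1) := by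
      rw [← Matrix.mul_assoc, ← hCbT 1, Matrix.mul_assoc]
    have e2 : J * (Sb 1 * Cn 1) = -((Sb 1)ᵀ * (J * Cn 1)) := by
      have h2 : J * Sb 1 = -((Sb 1)ᵀ * J) := by rw [hSbT 1, neg_neg]
      rw [← Matrix.mul_assoc, h2, Matrix.neg_mul, Matrix.mul_assoc]
    show J * (Cb 1 * Sn 1 + Sb 1 * Cn 1) = _
    rw [Matrix.mul_add, e1, e2]
  have hG1 : G 1 = (sigmaC n W (matTan A *ᵥ W)).re * 2 := by
    show (zb ⬝ᵥ ((J * Φ 1) *ᵥ z)).re = _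
    rw [hJΦ1, Matrix.add_mulVec, dotProduct_add, Complex.add_re]
    have t1 : zb ⬝ᵥ (((Cb 1)ᵀ * (J * Sn 1)) *ᵥ z) = sigmaC n W (matTan A *ᵥ W) := by
      rw [← Matrix.mulVec_mulVec, helperC 1, hCz, hconjW, ← Matrix.mulVec_mulVec, hSz]
      rfl
    have t2 : zb ⬝ᵥ ((-((Sb 1)ᵀ * (J * Cn 1))) *ᵥ z)
        = (starRingEnd ℂ) (sigmaC n W (matTan A *ᵥ W)) := by
      rw [Matrix.neg_mulVec, dotProduct_neg, ← Matrix.mulVec_mulVec, helperS 1, hSz,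
        ← Matrix.mulVec_mulVec, hCz]
      have hyy : conjVec n (matTan A *ᵥ W) ⬝ᵥ (J *ᵥ W)
          = -(W ⬝ᵥ (J *ᵥ conjVec n (matTan A *ᵥ W))) := by
        rw [dot_shift, hJ, Jmat_transpose, Matrix.neg_mulVec, neg_dotProduct,
          dotProduct_comm]
      rw [hyy, neg_neg]
      have hconjT : (starRingEnd ℂ) (sigmaC n W (matTan A *ᵥ W))
          = W ⬝ᵥ (Jmat n *ᵥ conjVec n (matTan A *ᵥ W)) := by
        show (starRingEnd ℂ) (W ⬝ᵥ (Jmat n *ᵥ (matTan A *ᵥ W))) = _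
        rw [conj_dot, hconjW]
        congr 1
        rw [← matConj_mulVec, matConj_J]
      rw [hconjT]
    rw [t1, t2, Complex.conj_re]
    ring
  -- conclude by monotonicity
  have hdiff : Differentiable ℝ G := fun s => (hG' s).differentiableAt
  have hmono := monotone_of_deriv_nonneg hdiff (fun s => by rw [(hG' s).deriv]; exact hρ s)
  have h01 : G 0 ≤ G 1 := hmono (by norm_num)
  rw [hG0, hG1] at h01
  linarith
end
end

section
/- Let S ∈ sp(n,ℂ), μ ∈ ℝ∖{0}, t ∈ ℂ, and assume det(cos(2πtS)) ≠ 0. For T ∈ sp(n,ℂ) with ±λ_1,…,±λ_m its non-zero eigenvalues (with multiplicity), define √(det cos(2πtT)) := Π_{j=1}^m cos(2πtλ_j) and Γ̂^μ_{t,T}(w) := (√(det cos(2πtT)))^{−1} exp(−(2π/|μ|) σ(w, tan(2πtT)w)). Then for all w ∈ ℂ^{2n}: Γ̂^μ_{t,S}(w) = Γ̂^μ_{t,S_r}(w) · Γ̂^μ_{t,S_i}(w); equivalently, √(det cos(2πtS)) = √(det cos(2πtS_r)) · √(det cos(2πtS_i)) and σ(w, tan(2πtS)w) = σ(w, tan(2πtS_r)w)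 + σ(w, tan(2πtS_i)w). -/
open MeasureTheory Complex Matrix

noncomputable section

/-- `l = [λ_1, …, λ_m]` lists, with multiplicity, one representative of each pair
`±λ_j` of non-zero eigenvalues of `T`: the eigenvalues of `T` (the roots of its
characteristic polynomial) are exactly `λ_1, -λ_1, …, λ_m, -λ_m` together with
`2n - 2m` zeros. -/
def IsPairingList (n : ℕ) (T : Matrix (Idx n) (Idx n) ℂ) (l : List ℂ) : Prop :=
  (∀ z ∈ l, z ≠ 0) ∧
    T.charpoly.roots = (l : Multiset ℂ) + ((l.map Neg.neg : List ℂ) : Multiset ℂ) +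
      Multiset.replicate (2 * n - 2 * l.length) 0

/-- `√(det cos(2πtT)) := Π_j cos(2πtλ_j)`, where `±λ_1, …, ±λ_m` are the non-zero
eigenvalues of `T`, listed with multiplicity by the pairing list `l`. -/
def sqrtDetCos (t : ℂ) (l : List ℂ) : ℂ :=
  ∏ i : Fin l.length, Complex.cos (2 * (Real.pi : ℂ) * t * l.get i)

/-- The Fourier transform `Γ̂^μ_{t,T}(w) = det(cos 2πtT)^{-1/2}
exp(-(2π/|μ|) σ(w, tan(2πtT) w))` of the heat kernel for `|U|⁻¹ L_T` at time `t`. -/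
def GammaHat (n : ℕ) (μ : ℝ) (t : ℂ) (T : Matrix (Idx n) (Idx n) ℂ) (l : List ℂ)
    (w : Idx n → ℂ) : ℂ :=
  (sqrtDetCos t l)⁻¹ *
    Complex.exp (-(2 * (Real.pi : ℂ) / ((|μ| : ℝ) : ℂ)) *
      sigmaC n w ((matTan ((2 * (Real.pi : ℂ) * t) • T)).mulVec w))

section PartA1

open Polynomial Module

lemma evenprod {f : ℂ → ℂ} (hf : ∀ z, f (-z) = f z) :
    ∀ (s s' : Multiset ℂ), s + s.map (fun z => -z) = s' + s'.map (fun z => -z) →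
      (s.map f).prod = (s'.map f).prod := by
  intro s
  induction s using Multiset.induction with
  | empty =>
    intro s' h
    have hc := congrArg Multiset.card h
    simp only [Multiset.card_add, Multiset.card_map, Multiset.card_zero] at hc
    have : s' = 0 := Multiset.card_eq_zero.mp (by omega)
    subst this; rfl
  | cons a s IH =>
    intro s' h
    have ha : a ∈ s' ∨ -a ∈ s' := by
      have hmem : a ∈ s' + s'.map (fun z => -z) := by
        rw [← h]; exact Multiset.mem_add.mpr (Or.inl (Multiset.mem_cons_self a s))
      rcases Multiset.mem_add.mp hmem with h1 | h1
      · exact Or.inl h1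
      · right
        obtain ⟨b, hb, hab⟩ := Multiset.mem_map.mp h1
        rw [← hab, neg_neg]; exact hb
    rcases ha with ha | ha
    · obtain ⟨s'', rfl⟩ : ∃ s'', s' = a ::ₘ s'' := ⟨s'.erase a, (Multiset.cons_erase ha).symm⟩
      have e : ∀ (u : Multiset ℂ), (a ::ₘ u) + (a ::ₘ u).map (fun z => -z)
          = (u + u.map (fun z => -z)) + ({a} + {-a}) := by
        intro u
        simp only [Multiset.map_cons, ← Multiset.singleton_add, Multiset.map_add,
          Multiset.map_singleton]
        abel
      rw [e s, e s''] at h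
      have h' := add_right_cancel h
      simp only [Multiset.map_cons, Multiset.prod_cons, IH s'' h']
    · obtain ⟨s'', rfl⟩ : ∃ s'', s' = (-a) ::ₘ s'' := ⟨s'.erase (-a), (Multiset.cons_erase ha).symm⟩
      have e1 : (a ::ₘ s) + (a ::ₘ s).map (fun z => -z)
          = (s + s.map (fun z => -z)) + ({a} + {-a}) := by
        simp only [Multiset.map_cons, ← Multiset.singleton_add, Multiset.map_add,
          Multiset.map_singleton]
        abel
      have e2 : ((-a) ::ₘ s'') + ((-a) ::ₘ s'').map (fun z => -z)
          = (s'' + s''.map (fun z => -z)) + ({a} + {-a}) := by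
        simp only [Multiset.map_cons, neg_neg, ← Multiset.singleton_add, Multiset.map_add,
          Multiset.map_singleton]
        abel
      rw [e1, e2] at h
      have h' := add_right_cancel h
      rw [Multiset.map_cons, Multiset.map_cons, Multiset.prod_cons, Multiset.prod_cons,
        IH s'' h', hf a]

lemma disjoint_biSup_biSup {R M ι : Type*} [Ring R] [AddCommGroup M] [Module R M]
    {p : ι → Submodule R M} (h : iSupIndep p) {s t : Set ι} (hst : Disjoint s t) :
    Disjoint (⨆ i ∈ s, p i) (⨆ i ∈ t, p i) := by
  classical
  have key : ∀ (F : Finset ι) (t : Set ι), (∀ i ∈ F, i ∉ t) →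
      Disjoint (⨆ i ∈ F, p i) (⨆ i ∈ t, p i) := by
    intro F
    induction F using Finset.induction_on with
    | empty => intro t _; simp
    | @insert a F ha IH =>
      intro t ht
      rw [Finset.iSup_insert]
      refine Disjoint.disjoint_sup_left_of_disjoint_sup_right
        (IH t fun i hi => ht i (Finset.mem_insert_of_mem hi)) ?_
      have e : (⨆ i ∈ F, p i) ⊔ (⨆ i ∈ t, p i) = ⨆ i ∈ ((↑F : Set ι) ∪ t), p i := by
        rw [iSup_union]
        congr 1
      rw [e]
      refine h.disjoint_biSup ?_
      simp only [Set.mem_union, Finset.mem_coe]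
      push_neg
      exact ⟨ha, ht a (Finset.mem_insert_self a F)⟩
  rw [Submodule.disjoint_def]
  intro x hxs hxt
  rw [iSup_subtype'] at hxs
  obtain ⟨Fs, hFs⟩ := Submodule.mem_iSup_iff_exists_finset.mp hxs
  have hx2 : x ∈ ⨆ i ∈ Fs.image (Subtype.val : s → ι), p i := by
    refine (iSup₂_le fun i hi => ?_ : (⨆ i ∈ Fs, p ↑i) ≤ _) hFs
    exact le_iSup₂_of_le (↑i) (Finset.mem_image_of_mem _ hi) le_rfl
  refine Submodule.disjoint_def.mp (key (Fs.image Subtype.val) t ?_) x hx2 hxt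
  intro i hi
  obtain ⟨j, _, rfl⟩ := Finset.mem_image.mp hi
  exact Set.disjoint_left.mp hst j.2

end PartA1
section PartA2

open Polynomial Module

lemma natTrailingDegree_comp_eq_rootMultiplicity (p : Polynomial ℂ) (hp : p ≠ 0) (μ : ℂ) :
    (p.comp (X + C μ)).natTrailingDegree = p.rootMultiplicity μ := by
  set m := p.rootMultiplicity μ with hm
  set q := p /ₘ (X - C μ) ^ m with hqdef
  have hfac : (X - C μ) ^ m * q = p := Polynomial.pow_mul_divByMonic_rootMultiplicity_eq p μ
  have hqe : q.eval μ ≠ 0 := Polynomial.eval_divByMonic_pow_rootMultiplicity_ne_zero μ hp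
  have hcomp : p.comp (X + C μ) = X ^ m * q.comp (X + C μ) := by
    conv_lhs => rw [← hfac]
    rw [mul_comp, pow_comp, sub_comp, X_comp, C_comp, add_sub_cancel_right]
  have hr0 : (q.comp (X + C μ)).eval 0 = q.eval μ := by
    simp [eval_comp]
  have hrne : q.comp (X + C μ) ≠ 0 := fun h => hqe (by rw [← hr0, h]; simp)
  rw [hcomp, Polynomial.natTrailingDegree_mul (pow_ne_zero m X_ne_zero) hrne,
    Polynomial.natTrailingDegree_X_pow]
  have h0 : (q.comp (X + C μ)).natTrailingDegree = 0 :=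
    Polynomial.natTrailingDegree_eq_zero.mpr
      (Or.inr (by rw [Polynomial.coeff_zero_eq_eval_zero, hr0]; exact hqe))
  omega

lemma charpoly_sub_smul_one {ι : Type} [Fintype ι] [DecidableEq ι]
    (M : Matrix ι ι ℂ) (μ : ℂ) :
    (M - μ • 1).charpoly = M.charpoly.comp (X + C μ) := by
  rw [comp_eq_aeval, Matrix.charpoly, Matrix.charpoly,
    AlgHom.map_det (aeval (X + C μ) : Polynomial ℂ →ₐ[ℂ] Polynomial ℂ)]
  congr 1
  ext i j
  by_cases h : i = j
  · subst h
    simp [Matrix.charmatrix_apply, Matrix.one_apply, Matrix.sub_apply, Matrix.smul_apply]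
    ring
  · simp [Matrix.charmatrix_apply, Matrix.one_apply, Matrix.sub_apply, Matrix.smul_apply,
      Matrix.diagonal_apply_ne _ h, h]

lemma mulVecLin_sub_smul_one {ι : Type} [Fintype ι] [DecidableEq ι]
    (M : Matrix ι ι ℂ) (μ : ℂ) :
    Matrix.mulVecLin (M - μ • 1) = Matrix.mulVecLin M - μ • 1 := by
  refine LinearMap.ext fun v => ?_
  simp [Matrix.mulVecLin_apply, Matrix.sub_mulVec, Matrix.smul_mulVec,
    Matrix.one_mulVec, LinearMap.sub_apply, LinearMap.smul_apply, Module.End.one_apply]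

lemma charpoly_mulVecLin {ι : Type} [Fintype ι] [DecidableEq ι] (M : Matrix ι ι ℂ) :
    (Matrix.mulVecLin M).charpoly = M.charpoly := by
  rw [← LinearMap.charpoly_toMatrix (Matrix.mulVecLin M) (Pi.basisFun ℂ ι),
    LinearMap.toMatrix_eq_toMatrix']
  congr 1
  exact LinearMap.toMatrix'_toLin' M

lemma count_roots_eq_finrank {ι : Type} [Fintype ι] [DecidableEq ι]
    (M : Matrix ι ι ℂ) (μ : ℂ) :
    M.charpoly.roots.count μ
      = Module.finrank ℂ (Module.End.maxGenEigenspace (Matrix.mulVecLin M) μ) := by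
  classical
  rw [Polynomial.count_roots]
  have h1 : M.charpoly.rootMultiplicity μ = ((M - μ • 1).charpoly).natTrailingDegree := by
    rw [charpoly_sub_smul_one,
      natTrailingDegree_comp_eq_rootMultiplicity _ M.charpoly_monic.ne_zero μ]
  have h2 : (M - μ • 1).charpoly = LinearMap.charpoly (Matrix.mulVecLin (M - μ • 1)) :=
    (_root_.charpoly_mulVecLin _).symm
  have h3 := LinearMap.finrank_maxGenEigenspace_zero_eq (Matrix.mulVecLin (M - μ • 1))
  have h4 : Module.End.maxGenEigenspace (Matrix.mulVecLin (M - μ • 1)) 0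
      = Module.End.maxGenEigenspace (Matrix.mulVecLin M) μ := by
    ext x
    rw [Module.End.mem_maxGenEigenspace, Module.End.mem_maxGenEigenspace,
      mulVecLin_sub_smul_one]
    simp
  rw [h1, h2, ← h3, h4]

end PartA2
section PartA3

open Module

variable {N : Type} [Fintype N] [DecidableEq N]

set_option linter.unusedSectionVars false

lemma pow_apply_eq_on {X Y : Matrix N N ℂ} {W : Submodule ℂ (N → ℂ)}
    (hW : ∀ v ∈ W, X.mulVec v ∈ W) (heq : ∀ v ∈ W, X.mulVec v = Y.mulVec v)
    (μ : ℂ) (k : ℕ) :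
    ∀ v ∈ W, ((Matrix.mulVecLin X - μ • 1) ^ k) v ∈ W ∧
      ((Matrix.mulVecLin X - μ • 1) ^ k) v = ((Matrix.mulVecLin Y - μ • 1) ^ k) v := by
  induction k with
  | zero => intro v hv; simpa using hv
  | succ k IH =>
    intro v hv
    have hstep : (Matrix.mulVecLin X - μ • 1) v = X.mulVec v - μ • v := by
      simp [LinearMap.sub_apply, LinearMap.smul_apply, Module.End.one_apply,
        Matrix.mulVecLin_apply]
    have hmem : (Matrix.mulVecLin X - μ • 1) v ∈ W := by
      rw [hstep]; exact W.sub_mem (hW v hv) (W.smul_mem μ hv)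
    have hstepY : (Matrix.mulVecLin Y - μ • 1) v = (Matrix.mulVecLin X - μ • 1) v := by
      simp [LinearMap.sub_apply, LinearMap.smul_apply, Module.End.one_apply,
        Matrix.mulVecLin_apply, heq v hv]
    obtain ⟨m1, e1⟩ := IH ((Matrix.mulVecLin X - μ • 1) v) hmem
    refine ⟨?_, ?_⟩
    · rw [pow_succ, Module.End.mul_apply]; exact m1
    · rw [pow_succ, pow_succ, Module.End.mul_apply, Module.End.mul_apply, hstepY]
      exact e1

lemma pow_apply_eq_smul_on {X : Matrix N N ℂ} {W : Submodule ℂ (N → ℂ)}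
    (h0 : ∀ v ∈ W, X.mulVec v = 0) (μ : ℂ) (k : ℕ) :
    ∀ v ∈ W, ((Matrix.mulVecLin X - μ • 1) ^ k) v = ((-μ) ^ k) • v := by
  induction k with
  | zero => intro v hv; simp
  | succ k IH =>
    intro v hv
    have hstep : (Matrix.mulVecLin X - μ • 1) v = (-μ) • v := by
      simp [LinearMap.sub_apply, LinearMap.smul_apply, Module.End.one_apply,
        Matrix.mulVecLin_apply, h0 v hv, neg_smul]
    rw [pow_succ, Module.End.mul_apply, hstep, _root_.map_smul, IH v hv, smul_smul, pow_succ, mul_comm]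

variable {W₁ W₂ : Submodule ℂ (N → ℂ)}

lemma genEig_eq_of_parts {X S : Matrix N N ℂ}
    (htop : W₁ ⊔ W₂ = ⊤) (hdisj : Disjoint W₁ W₂)
    (h1 : ∀ v ∈ W₁, X.mulVec v = S.mulVec v) (h2 : ∀ v ∈ W₂, X.mulVec v = 0)
    (hSW₁ : ∀ v ∈ W₁, S.mulVec v ∈ W₁)
    {μ : ℂ} (hμ : μ ≠ 0)
    (hgen : Module.End.maxGenEigenspace (Matrix.mulVecLin S) μ ≤ W₁) :
    Module.End.maxGenEigenspace (Matrix.mulVecLin X) μ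
      = Module.End.maxGenEigenspace (Matrix.mulVecLin S) μ := by
  have hXW₁ : ∀ v ∈ W₁, X.mulVec v ∈ W₁ := fun v hv => by rw [h1 v hv]; exact hSW₁ v hv
  have hpow := pow_apply_eq_on hXW₁ h1 μ
  apply le_antisymm
  · intro v hv
    rw [Module.End.mem_maxGenEigenspace] at hv
    obtain ⟨k, hk⟩ := hv
    have hvtop : v ∈ W₁ ⊔ W₂ := htop ▸ Submodule.mem_top
    obtain ⟨vr, hvr, vi, hvi, rfl⟩ := Submodule.mem_sup.mp hvtop
    have hsplit : ((Matrix.mulVecLin X - μ • 1) ^ k) (vr + vi)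
        = ((Matrix.mulVecLin X - μ • 1) ^ k) vr + ((-μ) ^ k) • vi := by
      rw [map_add, pow_apply_eq_smul_on h2 μ k vi hvi]
    have hvi0 : vi = 0 := by
      have hmem1 : ((-μ) ^ k) • vi ∈ W₁ := by
        have : ((-μ) ^ k) • vi = -(((Matrix.mulVecLin X - μ • 1) ^ k) vr) := by
          rw [hsplit] at hk; exact eq_neg_of_add_eq_zero_right hk
        rw [this]; exact W₁.neg_mem (hpow k vr hvr).1
      have hmem2 : ((-μ) ^ k) • vi ∈ W₂ := W₂.smul_mem _ hvi
      have := Submodule.disjoint_def.mp hdisj _ hmem1 hmem2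
      have hne : ((-μ) ^ k) ≠ 0 := pow_ne_zero _ (neg_ne_zero.mpr hμ)
      exact (smul_eq_zero.mp this).resolve_left hne
    subst hvi0
    rw [add_zero] at hk ⊢
    rw [Module.End.mem_maxGenEigenspace]
    exact ⟨k, by rw [← (hpow k vr hvr).2]; exact hk⟩
  · intro v hv
    have hvW := hgen hv
    rw [Module.End.mem_maxGenEigenspace] at hv ⊢
    obtain ⟨k, hk⟩ := hv
    exact ⟨k, by rw [(hpow k v hvW).2]; exact hk⟩

lemma genEig_eq_bot_of_parts {X S : Matrix N N ℂ}
    (htop : W₁ ⊔ W₂ = ⊤) (hdisj : Disjoint W₁ W₂)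
    (h1 : ∀ v ∈ W₁, X.mulVec v = 0) (h2 : ∀ v ∈ W₂, X.mulVec v = S.mulVec v)
    (hSW₂ : ∀ v ∈ W₂, S.mulVec v ∈ W₂)
    {μ : ℂ} (hμ : μ ≠ 0)
    (hgen : Module.End.maxGenEigenspace (Matrix.mulVecLin S) μ ≤ W₁) :
    Module.End.maxGenEigenspace (Matrix.mulVecLin X) μ = ⊥ := by
  have hXW₂ : ∀ v ∈ W₂, X.mulVec v ∈ W₂ := fun v hv => by rw [h2 v hv]; exact hSW₂ v hv
  have hpow := pow_apply_eq_on hXW₂ h2 μ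
  rw [eq_bot_iff]
  intro v hv
  rw [Module.End.mem_maxGenEigenspace] at hv
  obtain ⟨k, hk⟩ := hv
  have hvtop : v ∈ W₁ ⊔ W₂ := htop ▸ Submodule.mem_top
  obtain ⟨vr, hvr, vi, hvi, rfl⟩ := Submodule.mem_sup.mp hvtop
  have hsplit : ((Matrix.mulVecLin X - μ • 1) ^ k) (vr + vi)
      = ((-μ) ^ k) • vr + ((Matrix.mulVecLin X - μ • 1) ^ k) vi := by
    rw [map_add, pow_apply_eq_smul_on h1 μ k vr hvr]
  have hvr0 : vr = 0 := by
    have hmem2 : ((-μ) ^ k) • vr ∈ W₂ := by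
      have : ((-μ) ^ k) • vr = -(((Matrix.mulVecLin X - μ • 1) ^ k) vi) := by
        rw [hsplit] at hk; exact eq_neg_of_add_eq_zero_left hk
      rw [this]; exact W₂.neg_mem (hpow k vi hvi).1
    have hmem1 : ((-μ) ^ k) • vr ∈ W₁ := W₁.smul_mem _ hvr
    have := Submodule.disjoint_def.mp hdisj _ hmem1 hmem2
    have hne : ((-μ) ^ k) ≠ 0 := pow_ne_zero _ (neg_ne_zero.mpr hμ)
    exact (smul_eq_zero.mp this).resolve_left hne
  subst hvr0
  rw [zero_add] at hk ⊢
  have hviS : vi ∈ Module.End.maxGenEigenspace (Matrix.mulVecLin S) μ := by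
    rw [Module.End.mem_maxGenEigenspace]
    exact ⟨k, by rw [← (hpow k vi hvi).2]; exact hk⟩
  have : vi ∈ W₁ := hgen hviS
  simpa using Submodule.disjoint_def.mp hdisj _ this hvi

end PartA3
section PartB

open NormedSpace

attribute [local instance] Matrix.linftyOpNormedRing Matrix.linftyOpNormedAlgebra

variable {ι : Type} [Fintype ι] [DecidableEq ι]

lemma matExp_eq (M : Matrix ι ι ℂ) : matExp M = NormedSpace.exp M := by
  rw [NormedSpace.exp_eq_tsum (𝕂 := ℂ)]; rfl

lemma exp_mul_eq {M N : Matrix ι ι ℂ} (h : M * N = 0) : NormedSpace.exp M * N = N := by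
  simp only [NormedSpace.exp_eq_tsum (𝕂 := ℂ)]
  erw [← Summable.tsum_mul_right N (NormedSpace.expSeries_summable' (𝕂 := ℂ) M)]
  rw [tsum_eq_single 0 ?_]
  · simp
  · intro k hk
    obtain ⟨k, rfl⟩ := Nat.exists_eq_succ_of_ne_zero hk
    rw [smul_mul_assoc, pow_succ, mul_assoc, h, mul_zero, smul_zero]

lemma mul_exp_eq {M N : Matrix ι ι ℂ} (h : M * N = 0) : M * NormedSpace.exp N = M := by
  simp only [NormedSpace.exp_eq_tsum (𝕂 := ℂ)]
  erw [← Summable.tsum_mul_left M (NormedSpace.expSeries_summable' (𝕂 := ℂ) N)]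
  rw [tsum_eq_single 0 ?_]
  · simp
  · intro k hk
    obtain ⟨k, rfl⟩ := Nat.exists_eq_succ_of_ne_zero hk
    rw [mul_smul_comm, pow_succ', ← mul_assoc, h, zero_mul, smul_zero]

lemma exp_mul_exp {M N : Matrix ι ι ℂ} (h : M * N = 0) :
    NormedSpace.exp M * NormedSpace.exp N = NormedSpace.exp M + NormedSpace.exp N - 1 := by
  have h1 : M * (NormedSpace.exp N - 1) = 0 := by
    rw [mul_sub, mul_exp_eq h, mul_one, sub_self]
  have h2 : NormedSpace.exp M * (NormedSpace.exp N - 1) = NormedSpace.exp N - 1 := exp_mul_eq h1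
  rw [mul_sub, mul_one] at h2
  linear_combination (norm := abel) h2

end PartB
section PartB2

open NormedSpace

attribute [local instance] Matrix.linftyOpNormedRing Matrix.linftyOpNormedAlgebra

set_option linter.unusedSectionVars false

variable {ι : Type} [Fintype ι] [DecidableEq ι]

variable {A B : Matrix ι ι ℂ}

lemma prods_zero (hAB : A * B = 0) (a b : ℂ) : (a • A) * (b • B) = 0 := by
  rw [smul_mul_assoc, mul_smul_comm, hAB]; simp

lemma matCos_eq (M : Matrix ι ι ℂ) :
    matCos M = (2:ℂ)⁻¹ • (NormedSpace.exp (Complex.I • M) + NormedSpace.exp ((-Complex.I) • M)) := by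
  rw [matCos, matExp_eq, matExp_eq, neg_smul]

lemma matSin_eq (M : Matrix ι ι ℂ) :
    matSin M = (2*Complex.I)⁻¹ • (NormedSpace.exp (Complex.I • M) - NormedSpace.exp ((-Complex.I) • M)) := by
  rw [matSin, matExp_eq, matExp_eq, neg_smul]

section
variable (hAB : A * B = 0) (hBA : B * A = 0)
include hAB hBA

lemma comm_smul (a b : ℂ) : Commute (a • A) (b • B) := by
  unfold Commute SemiconjBy
  rw [prods_zero hAB, prods_zero hBA]

lemma exp_smul_mul_exp_smul (a b : ℂ) :
    NormedSpace.exp (a • A) * NormedSpace.exp (b • B) = NormedSpace.exp (a • A) + NormedSpace.exp (b • B) - 1 :=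
  exp_mul_exp (prods_zero hAB a b)

lemma matCos_add : matCos (A + B) = matCos A * matCos B := by
  rw [matCos_eq, matCos_eq, matCos_eq, smul_add Complex.I A B, smul_add (-Complex.I) A B,
    Matrix.exp_add_of_commute _ _ (comm_smul hAB hBA _ _),
    Matrix.exp_add_of_commute _ _ (comm_smul hAB hBA _ _),
    smul_mul_assoc, mul_smul_comm, smul_smul, add_mul, mul_add, mul_add,
    exp_smul_mul_exp_smul hAB hBA Complex.I Complex.I,
    exp_smul_mul_exp_smul hAB hBA Complex.I (-Complex.I),
    exp_smul_mul_exp_smul hAB hBA (-Complex.I) Complex.I,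
    exp_smul_mul_exp_smul hAB hBA (-Complex.I) (-Complex.I)]
  match_scalars <;> norm_num

lemma matSin_add : matSin (A + B) = matSin A + matSin B := by
  rw [matSin_eq, matSin_eq, matSin_eq, smul_add Complex.I A B, smul_add (-Complex.I) A B,
    Matrix.exp_add_of_commute _ _ (comm_smul hAB hBA _ _),
    Matrix.exp_add_of_commute _ _ (comm_smul hAB hBA _ _),
    exp_smul_mul_exp_smul hAB hBA Complex.I Complex.I,
    exp_smul_mul_exp_smul hAB hBA (-Complex.I) (-Complex.I)]
  module

lemma matSin_mul_matCos : matSin A * matCos B = matSin A := by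
  rw [matSin_eq, matCos_eq, smul_mul_assoc, mul_smul_comm, smul_smul, sub_mul,
    mul_add, mul_add,
    exp_smul_mul_exp_smul hAB hBA Complex.I Complex.I,
    exp_smul_mul_exp_smul hAB hBA Complex.I (-Complex.I),
    exp_smul_mul_exp_smul hAB hBA (-Complex.I) Complex.I,
    exp_smul_mul_exp_smul hAB hBA (-Complex.I) (-Complex.I)]
  match_scalars <;> ring

end

lemma matTan_add (hAB : A * B = 0) (hBA : B * A = 0)
    (hdet : (matCos (A + B)).det ≠ 0) :
    matTan (A + B) = matTan A + matTan B := by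
  have hC : matCos (A + B) = matCos A * matCos B := matCos_add hAB hBA
  have hdetA : (matCos A).det ≠ 0 := by
    intro h; apply hdet; rw [hC, Matrix.det_mul, h, zero_mul]
  have hdetB : (matCos B).det ≠ 0 := by
    intro h; apply hdet; rw [hC, Matrix.det_mul, h, mul_zero]
  have hCcomm : matCos A * matCos B = matCos B * matCos A := by
    rw [← matCos_add hAB hBA, ← matCos_add hBA hAB, add_comm]
  have hAinv := Matrix.mul_nonsing_inv _ (isUnit_iff_ne_zero.mpr hdetA)
  have hBinv := Matrix.mul_nonsing_inv _ (isUnit_iff_ne_zero.mpr hdetB)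
  have sAinvB : matSin A * (matCos B)⁻¹ = matSin A := by
    conv_lhs => rw [← matSin_mul_matCos hAB hBA]
    rw [mul_assoc, hBinv, mul_one]
  have sBinvA : matSin B * (matCos A)⁻¹ = matSin B := by
    conv_lhs => rw [← matSin_mul_matCos hBA hAB]
    rw [mul_assoc, hAinv, mul_one]
  have t1 : matSin A * (matCos A * matCos B)⁻¹ = matSin A * (matCos A)⁻¹ := by
    rw [Matrix.mul_inv_rev, ← mul_assoc, sAinvB]
  have t2 : matSin B * (matCos A * matCos B)⁻¹ = matSin B * (matCos B)⁻¹ := by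
    rw [hCcomm, Matrix.mul_inv_rev, ← mul_assoc, sBinvA]
  rw [matTan, matTan, matTan, hC, matSin_add hAB hBA, add_mul, t1, t2]

end PartB2
section PartA4

open Module

variable {n : ℕ}

set_option linter.unusedSectionVars false

lemma genEig_le_Vreal (S : Matrix (Idx n) (Idx n) ℂ) {μ : ℂ} (h : μ.im = 0) :
    Module.End.maxGenEigenspace (Matrix.mulVecLin S) μ ≤ Vreal n S := by
  have hμ : μ = ((μ.re : ℝ) : ℂ) := by apply Complex.ext <;> simp [h]
  calc Module.End.maxGenEigenspace (Matrix.mulVecLin S) μ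
      = genEig n S ((μ.re : ℝ) : ℂ) := by rw [← hμ]; rfl
    _ ≤ Vreal n S := le_iSup (fun lam : ℝ => genEig n S (lam : ℂ)) μ.re

lemma genEig_le_Vimag (S : Matrix (Idx n) (Idx n) ℂ) {μ : ℂ} (h : μ.im ≠ 0) :
    Module.End.maxGenEigenspace (Matrix.mulVecLin S) μ ≤ Vimag n S :=
  le_iSup (fun z : {z : ℂ // z.im ≠ 0} => genEig n S (z : ℂ)) ⟨μ, h⟩

lemma Vreal_sup_Vimag (S : Matrix (Idx n) (Idx n) ℂ) : Vreal n S ⊔ Vimag n S = ⊤ := by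
  rw [eq_top_iff, ← Module.End.iSup_maxGenEigenspace_eq_top (Matrix.mulVecLin S)]
  refine iSup_le fun μ => ?_
  by_cases h : μ.im = 0
  · exact le_trans (genEig_le_Vreal S h) le_sup_left
  · exact le_trans (genEig_le_Vimag S h) le_sup_right

lemma Vreal_disjoint_Vimag (S : Matrix (Idx n) (Idx n) ℂ) :
    Disjoint (Vreal n S) (Vimag n S) := by
  have hind := Module.End.independent_maxGenEigenspace (Matrix.mulVecLin S)
  have h1 : Vreal n S
      = ⨆ z ∈ {z : ℂ | z.im = 0}, Module.End.maxGenEigenspace (Matrix.mulVecLin S) z := by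
    apply le_antisymm
    · refine iSup_le fun lam => ?_
      exact le_biSup _ (by simp : ((lam : ℂ) : ℂ).im = 0)
    · refine iSup₂_le fun z hz => ?_
      exact genEig_le_Vreal S hz
  have h2 : Vimag n S
      = ⨆ z ∈ {z : ℂ | z.im ≠ 0}, Module.End.maxGenEigenspace (Matrix.mulVecLin S) z := by
    apply le_antisymm
    · refine iSup_le fun z => ?_
      exact le_biSup _ z.2
    · refine iSup₂_le fun z hz => ?_
      exact genEig_le_Vimag S hz
  rw [h1, h2]
  exact disjoint_biSup_biSup hind (Set.disjoint_left.mpr fun z hz h' => h' hz)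

lemma S_maps_Vreal (S : Matrix (Idx n) (Idx n) ℂ) :
    ∀ v ∈ Vreal n S, S.mulVec v ∈ Vreal n S := by
  intro v hv
  refine Submodule.iSup_induction (motive := fun x => S.mulVec x ∈ Vreal n S) _ hv ?_ ?_ ?_
  · intro lam x hx
    have := Module.End.mapsTo_maxGenEigenspace_of_comm
      (Commute.refl (Matrix.mulVecLin S)) ((lam : ℝ) : ℂ) hx
    exact le_iSup (fun lam : ℝ => genEig n S (lam : ℂ)) lam this
  · simp [Matrix.mulVec_zero]
  · intro x y hx hy; rw [Matrix.mulVec_add]; exact (Vreal n S).add_mem hx hy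

lemma S_maps_Vimag (S : Matrix (Idx n) (Idx n) ℂ) :
    ∀ v ∈ Vimag n S, S.mulVec v ∈ Vimag n S := by
  intro v hv
  refine Submodule.iSup_induction (motive := fun x => S.mulVec x ∈ Vimag n S) _ hv ?_ ?_ ?_
  · intro z x hx
    have := Module.End.mapsTo_maxGenEigenspace_of_comm
      (Commute.refl (Matrix.mulVecLin S)) (z : ℂ) hx
    exact le_iSup (fun z : {z : ℂ // z.im ≠ 0} => genEig n S (z : ℂ)) z this
  · simp [Matrix.mulVec_zero]
  · intro x y hx hy; rw [Matrix.mulVec_add]; exact (Vimag n S).add_mem hx hy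

variable {S Sr Si : Matrix (Idx n) (Idx n) ℂ}

lemma eq_of_mulVec_eq {A B : Matrix (Idx n) (Idx n) ℂ}
    (h : ∀ v, A.mulVec v = B.mulVec v) : A = B := by
  ext i j
  have := congrFun (h (Pi.single j 1)) i
  simpa [Matrix.mulVec_single] using this

section
variable (hSr : IsRealPart n S Sr) (hSi : IsImagPart n S Si)
include hSr hSi

lemma S_decomp (v : Idx n → ℂ) :
    ∃ vr ∈ Vreal n S, ∃ vi ∈ Vimag n S, vr + vi = v :=
  Submodule.mem_sup.mp (Vreal_sup_Vimag S ▸ Submodule.mem_top (x := v))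

lemma S_eq_add : S = Sr + Si := by
  refine (eq_of_mulVec_eq fun v => ?_).symm
  obtain ⟨vr, hvr, vi, hvi, rfl⟩ := S_decomp hSr hSi v
  rw [Matrix.add_mulVec, Matrix.mulVec_add, Matrix.mulVec_add, hSr.1 vr hvr, hSr.2 vi hvi,
    hSi.1 vr hvr, hSi.2 vi hvi, Matrix.mulVec_add]
  abel

lemma Sr_mul_Si : Sr * Si = 0 := by
  refine eq_of_mulVec_eq fun v => ?_
  rw [← Matrix.mulVec_mulVec]
  obtain ⟨vr, hvr, vi, hvi, rfl⟩ := S_decomp hSr hSi v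
  rw [Matrix.mulVec_add, hSi.1 vr hvr, hSi.2 vi hvi, zero_add,
    hSr.2 _ (S_maps_Vimag S vi hvi)]
  simp

lemma Si_mul_Sr : Si * Sr = 0 := by
  refine eq_of_mulVec_eq fun v => ?_
  rw [← Matrix.mulVec_mulVec]
  obtain ⟨vr, hvr, vi, hvi, rfl⟩ := S_decomp hSr hSi v
  rw [Matrix.mulVec_add, hSr.1 vr hvr, hSr.2 vi hvi, add_zero,
    hSi.1 _ (S_maps_Vreal S vr hvr)]
  simp

lemma roots_filter_add :
    S.charpoly.roots.filter (fun z => z ≠ 0)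
      = Sr.charpoly.roots.filter (fun z => z ≠ 0)
        + Si.charpoly.roots.filter (fun z => z ≠ 0) := by
  classical
  rw [Multiset.ext]
  intro μ
  rw [Multiset.count_add, Multiset.count_filter, Multiset.count_filter, Multiset.count_filter]
  by_cases hμ : μ = 0
  · simp [hμ]
  · simp only [hμ, if_pos, ne_eq, not_false_eq_true, if_true]
    rw [count_roots_eq_finrank S μ, count_roots_eq_finrank Sr μ, count_roots_eq_finrank Si μ]
    by_cases him : μ.im = 0
    · have e1 : Module.End.maxGenEigenspace (Matrix.mulVecLin Sr) μ
          = Module.End.maxGenEigenspace (Matrix.mulVecLin S) μ :=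
        genEig_eq_of_parts (Vreal_sup_Vimag S) (Vreal_disjoint_Vimag S) hSr.1 hSr.2
          (S_maps_Vreal S) hμ (genEig_le_Vreal S him)
      have e2 : Module.End.maxGenEigenspace (Matrix.mulVecLin Si) μ = ⊥ :=
        genEig_eq_bot_of_parts (Vreal_sup_Vimag S) (Vreal_disjoint_Vimag S) hSi.1 hSi.2
          (S_maps_Vimag S) hμ (genEig_le_Vreal S him)
      rw [e1, e2, finrank_bot]
      omega
    · have e1 : Module.End.maxGenEigenspace (Matrix.mulVecLin Si) μ
          = Module.End.maxGenEigenspace (Matrix.mulVecLin S) μ :=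
        genEig_eq_of_parts (W₁ := Vimag n S) (W₂ := Vreal n S)
          (by rw [sup_comm]; exact Vreal_sup_Vimag S) (Vreal_disjoint_Vimag S).symm
          hSi.2 hSi.1 (S_maps_Vimag S) hμ (genEig_le_Vimag S him)
      have e2 : Module.End.maxGenEigenspace (Matrix.mulVecLin Sr) μ = ⊥ :=
        genEig_eq_bot_of_parts (W₁ := Vimag n S) (W₂ := Vreal n S)
          (by rw [sup_comm]; exact Vreal_sup_Vimag S) (Vreal_disjoint_Vimag S).symm
          hSr.2 hSr.1 (S_maps_Vreal S) hμ (genEig_le_Vimag S him)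
      rw [e1, e2, finrank_bot]
      omega

end

lemma pairing_filter {T : Matrix (Idx n) (Idx n) ℂ} {l : List ℂ} (h : IsPairingList n T l) :
    (l : Multiset ℂ) + (l : Multiset ℂ).map (fun z => -z)
      = T.charpoly.roots.filter (fun z => z ≠ 0) := by
  classical
  rw [h.2, Multiset.filter_add, Multiset.filter_add]
  have e0 : (Multiset.replicate (2 * n - 2 * l.length) (0 : ℂ)).filter (fun z => z ≠ 0)
      = 0 := by
    rw [Multiset.filter_eq_nil]
    intro a ha
    rw [Multiset.eq_of_mem_replicate ha]
    simp
  have e1 : ((l : Multiset ℂ)).filter (fun z => z ≠ 0) = (l : Multiset ℂ) :=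
    Multiset.filter_eq_self.mpr fun a ha => h.1 a (by exact_mod_cast ha)
  have e2 : (((l.map Neg.neg : List ℂ) : Multiset ℂ)).filter (fun z => z ≠ 0)
      = (l : Multiset ℂ).map (fun z => -z) := by
    have hco : ((l.map Neg.neg : List ℂ) : Multiset ℂ) = (l : Multiset ℂ).map (fun z => -z) := by
      rw [Multiset.map_coe]
    rw [hco]
    refine Multiset.filter_eq_self.mpr fun a ha => ?_
    obtain ⟨b, hb, rfl⟩ := Multiset.mem_map.mp ha
    simpa using h.1 b (by exact_mod_cast hb)
  rw [e0, e1, e2, add_zero]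

lemma sqrtDetCos_eq_prod (t : ℂ) (l : List ℂ) :
    sqrtDetCos t l
      = ((l : Multiset ℂ).map (fun z => Complex.cos (2 * (Real.pi : ℂ) * t * z))).prod := by
  rw [sqrtDetCos, Multiset.map_coe, Multiset.prod_coe]
  conv_rhs => rw [← List.ofFn_get l, List.map_ofFn, List.prod_ofFn]
  rfl

end PartA4
/-- for `μ ≠ 0`, `t ∈ ℂ` with `det cos(2πtS) ≠ 0`, the Gaussian
`Γ̂^μ_{t,S}` factors as `Γ̂^μ_{t,S_r} ⋅ Γ̂^μ_{t,S_i}`; equivalently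
`√det cos(2πtS) = √det cos(2πtS_r) ⋅ √det cos(2πtS_i)` and
`σ(w, tan(2πtS)w) = σ(w, tan(2πtS_r)w) + σ(w, tan(2πtS_i)w)`. -/
theorem statement14 (n : ℕ) (S Sr Si : Matrix (Idx n) (Idx n) ℂ)
    (hS : InSp n S) (hSr : IsRealPart n S Sr) (hSi : IsImagPart n S Si)
    (μ : ℝ) (hμ : μ ≠ 0) (t : ℂ)
    (hdet : (matCos ((2 * (Real.pi : ℂ) * t) • S)).det ≠ 0)
    (lS lr li : List ℂ)
    (hlS : IsPairingList n S lS) (hlr : IsPairingList n Sr lr) (hli : IsPairingList n Si li) :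
    (∀ w : Idx n → ℂ,
        GammaHat n μ t S lS w = GammaHat n μ t Sr lr w * GammaHat n μ t Si li w) ∧
    sqrtDetCos t lS = sqrtDetCos t lr * sqrtDetCos t li ∧
    ∀ w : Idx n → ℂ,
      sigmaC n w ((matTan ((2 * (Real.pi : ℂ) * t) • S)).mulVec w) =
        sigmaC n w ((matTan ((2 * (Real.pi : ℂ) * t) • Sr)).mulVec w) +
          sigmaC n w ((matTan ((2 * (Real.pi : ℂ) * t) • Si)).mulVec w) := by
  have hadd : S = Sr + Si := S_eq_add hSr hSi
  have hrs : Sr * Si = 0 := Sr_mul_Si hSr hSi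
  have hsr : Si * Sr = 0 := Si_mul_Sr hSr hSi
  set c : ℂ := 2 * (Real.pi : ℂ) * t with hc
  have hAB : (c • Sr) * (c • Si) = 0 := by rw [smul_mul_assoc, mul_smul_comm, hrs]; simp
  have hBA : (c • Si) * (c • Sr) = 0 := by rw [smul_mul_assoc, mul_smul_comm, hsr]; simp
  have hsum : c • S = c • Sr + c • Si := by rw [hadd, smul_add]
  have hfeven : ∀ z : ℂ, Complex.cos (2 * (Real.pi : ℂ) * t * (-z))
      = Complex.cos (2 * (Real.pi : ℂ) * t * z) := by
    intro z; rw [mul_neg, Complex.cos_neg]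
  have hmult : (lS : Multiset ℂ) + (lS : Multiset ℂ).map (fun z => -z)
      = ((lr : Multiset ℂ) + (li : Multiset ℂ))
        + (((lr : Multiset ℂ) + (li : Multiset ℂ)).map (fun z => -z)) := by
    rw [pairing_filter hlS, roots_filter_add hSr hSi, ← pairing_filter hlr,
      ← pairing_filter hli, Multiset.map_add]
    abel
  have hsq : sqrtDetCos t lS = sqrtDetCos t lr * sqrtDetCos t li := by
    rw [sqrtDetCos_eq_prod, sqrtDetCos_eq_prod, sqrtDetCos_eq_prod,
      evenprod hfeven _ _ hmult, Multiset.map_add, Multiset.prod_add]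
  have hdet' : (matCos (c • Sr + c • Si)).det ≠ 0 := by rw [← hsum]; exact hdet
  have htan : matTan (c • S) = matTan (c • Sr) + matTan (c • Si) := by
    rw [hsum]; exact matTan_add hAB hBA hdet'
  have hsig : ∀ w : Idx n → ℂ,
      sigmaC n w ((matTan (c • S)).mulVec w)
        = sigmaC n w ((matTan (c • Sr)).mulVec w)
          + sigmaC n w ((matTan (c • Si)).mulVec w) := by
    intro w
    rw [htan]
    simp [sigmaC, Matrix.add_mulVec, Matrix.mulVec_add, dotProduct_add]
  refine ⟨?_, hsq, hsig⟩
  intro w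
  rw [GammaHat, GammaHat, GammaHat, hsq, hsig w, mul_inv, mul_add, Complex.exp_add]
  ring
end
end
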